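/- Let d ≥ 5 be an integer and let G, H ∈ ℂ[t₀,t₁] be homogeneous of degree d−1, with coefficients G_{i,j} and H_{i,j}. Then t₀²·V_{d−2} + span_ℂ{t₀G, t₁G, t₀H, t₁H} = V_d if and only if the 4×2 complex matrix with rows (G_{0,d−1}, 0), (G_{1,d−2}, G_{0,d−1}), (H_{0,d−1}, 0), (H_{1,d−2}, H_{0,d−1}) has rank 2 (equivalently, G_{0,d−1} ≠ 0 or H_{0,d−1} ≠ 0). -/

import Mathlib

open MvPolynomial

noncomputable section

/-- `V n` is the space of homogeneous polynomials of degree `n` in `ℂ[t₀,t₁]`. -/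
abbrev V (n : ℕ) : Submodule ℂ (MvPolynomial (Fin 2) ℂ) :=
  MvPolynomial.homogeneousSubmodule (Fin 2) ℂ n

/-- `coeff2 i j F` is the coefficient of the monomial `t₀^i t₁^j` in `F`. -/
def coeff2 (i j : ℕ) (F : MvPolynomial (Fin 2) ℂ) : ℂ :=
  MvPolynomial.coeff (Finsupp.single 0 i + Finsupp.single 1 j) F

namespace Stmt3Aux

lemma degree_fin2 (m : Fin 2 →₀ ℕ) : m.degree = m 0 + m 1 := by
  rw [Finsupp.degree_apply,
    Finset.sum_subset (Finset.subset_univ m.support)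
      (fun i _ hi => Finsupp.notMem_support_iff.mp hi),
    Fin.sum_univ_two]

lemma fin2_eq (m : Fin 2 →₀ ℕ) :
    m = Finsupp.single 0 (m 0) + Finsupp.single 1 (m 1) := by
  ext i
  fin_cases i <;> simp [Finsupp.single_apply]

lemma deg_pair (a b : ℕ) :
    (Finsupp.single (0 : Fin 2) a + Finsupp.single 1 b).degree = a + b := by
  rw [degree_fin2]; simp [Finsupp.single_apply]

lemma deg_s1 (b : ℕ) : (Finsupp.single (1 : Fin 2) b).degree = b := by
  rw [degree_fin2]; simp [Finsupp.single_apply]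

lemma pair_ne (a b c : ℕ) (ha : a ≠ 0) :
    (Finsupp.single (0 : Fin 2) a + Finsupp.single 1 b) ≠ Finsupp.single 1 c := by
  intro h
  have := DFunLike.congr_fun h 0
  simp [Finsupp.single_apply] at this
  exact ha this

/-- `A d` is `t₀² · V (d-2)`. -/
def A (d : ℕ) : Submodule ℂ (MvPolynomial (Fin 2) ℂ) :=
  (V (d - 2)).map (LinearMap.mulLeft ℂ ((X 0 : MvPolynomial (Fin 2) ℂ) ^ 2))

lemma mem_A {d : ℕ} (hd : 2 ≤ d) {p : MvPolynomial (Fin 2) ℂ}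
    (hp : p.IsHomogeneous d)
    (h0 : coeff (Finsupp.single 1 d) p = 0)
    (h1 : coeff (Finsupp.single 0 1 + Finsupp.single 1 (d - 1)) p = 0) :
    p ∈ A d := by
  rw [← p.support_sum_monomial_coeff]
  apply Submodule.sum_mem
  intro v hv
  have hc : coeff v p ≠ 0 := MvPolynomial.mem_support_iff.mp hv
  have hdeg : v 0 + v 1 = d := by
    have hdeg' : v.degree = d := by
      by_contra hne
      exact hc (hp.coeff_eq_zero hne)
    rwa [degree_fin2] at hdeg'
  by_cases hv0 : v 0 = 0
  · exfalso
    have hv1 : v 1 = d := by omega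
    have hveq : v = Finsupp.single 1 d := by
      have h := fin2_eq v
      rw [hv0, hv1] at h
      simpa using h
    exact hc (hveq ▸ h0)
  by_cases hv0' : v 0 = 1
  · exfalso
    have hv1 : v 1 = d - 1 := by omega
    have hveq : v = Finsupp.single 0 1 + Finsupp.single 1 (d - 1) := by
      have h := fin2_eq v
      rwa [hv0', hv1] at h
    exact hc (hveq ▸ h1)
  · have hge : 2 ≤ v 0 := by omega
    refine Submodule.mem_map.mpr
      ⟨monomial (Finsupp.single 0 (v 0 - 2) + Finsupp.single 1 (v 1)) (coeff v p), ?_, ?_⟩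
    · rw [mem_homogeneousSubmodule]
      exact isHomogeneous_monomial _ (by rw [deg_pair]; omega)
    · simp only [LinearMap.mulLeft_apply]
      rw [X_pow_eq_monomial, monomial_mul, one_mul]
      have hveq : Finsupp.single (0 : Fin 2) 2
          + (Finsupp.single 0 (v 0 - 2) + Finsupp.single 1 (v 1)) = v := by
        rw [← add_assoc, ← Finsupp.single_add, show 2 + (v 0 - 2) = v 0 by omega]
        exact (fin2_eq v).symm
      rw [hveq]

lemma decomp {d : ℕ} (hd : 2 ≤ d) {p : MvPolynomial (Fin 2) ℂ} (hp : p ∈ V d) :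
    p - coeff (Finsupp.single 1 d) p • monomial (Finsupp.single 1 d) (1 : ℂ)
      - coeff (Finsupp.single 0 1 + Finsupp.single 1 (d - 1)) p •
          monomial (Finsupp.single 0 1 + Finsupp.single 1 (d - 1)) (1 : ℂ) ∈ A d := by
  have hm0 : (monomial (Finsupp.single 1 d) (1 : ℂ)) ∈ V d :=
    isHomogeneous_monomial _ (deg_s1 d)
  have hm1 : (monomial (Finsupp.single 0 1 + Finsupp.single 1 (d - 1)) (1 : ℂ)) ∈ V d :=
    isHomogeneous_monomial _ (by rw [deg_pair]; omega)
  have hmem : p - coeff (Finsupp.single 1 d) p • monomial (Finsupp.single 1 d) (1 : ℂ)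
      - coeff (Finsupp.single 0 1 + Finsupp.single 1 (d - 1)) p •
          monomial (Finsupp.single 0 1 + Finsupp.single 1 (d - 1)) (1 : ℂ) ∈ V d :=
    Submodule.sub_mem _ (Submodule.sub_mem _ hp (Submodule.smul_mem _ _ hm0))
      (Submodule.smul_mem _ _ hm1)
  have hne := pair_ne 1 (d - 1) d one_ne_zero
  refine mem_A hd ((mem_homogeneousSubmodule _ _).mp hmem) ?_ ?_
  · rw [coeff_sub, coeff_sub, coeff_smul, coeff_smul, coeff_monomial, coeff_monomial,
      if_pos rfl, if_neg hne]
    simp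
  · rw [coeff_sub, coeff_sub, coeff_smul, coeff_smul, coeff_monomial, coeff_monomial,
      if_neg (Ne.symm hne), if_pos rfl]
    simp

lemma coeff_m0_X0_mul {d : ℕ} (hd : 1 ≤ d) (F : MvPolynomial (Fin 2) ℂ) :
    coeff (Finsupp.single 1 d) ((X 0 : MvPolynomial (Fin 2) ℂ) * F) = 0 := by
  rw [mul_comm, coeff_mul_X']
  simp [Finsupp.single_apply]

lemma coeff_m1_X0_mul {d : ℕ} (F : MvPolynomial (Fin 2) ℂ) :
    coeff (Finsupp.single 0 1 + Finsupp.single 1 (d - 1))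
      ((X 0 : MvPolynomial (Fin 2) ℂ) * F) = coeff (Finsupp.single 1 (d - 1)) F :=
  coeff_X_mul _ _ _

lemma coeff_m0_X1_mul {d : ℕ} (hd : 1 ≤ d) (F : MvPolynomial (Fin 2) ℂ) :
    coeff (Finsupp.single 1 d) ((X 1 : MvPolynomial (Fin 2) ℂ) * F)
      = coeff (Finsupp.single 1 (d - 1)) F := by
  rw [show (Finsupp.single 1 d : Fin 2 →₀ ℕ)
      = Finsupp.single 1 1 + Finsupp.single 1 (d - 1) by
    rw [← Finsupp.single_add]; congr 1; omega]
  exact coeff_X_mul _ _ _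

lemma coeff_m1_X1_mul {d : ℕ} (hd : 2 ≤ d) (F : MvPolynomial (Fin 2) ℂ) :
    coeff (Finsupp.single 0 1 + Finsupp.single 1 (d - 1))
      ((X 1 : MvPolynomial (Fin 2) ℂ) * F)
      = coeff (Finsupp.single 0 1 + Finsupp.single 1 (d - 2)) F := by
  rw [show (Finsupp.single 0 1 + Finsupp.single 1 (d - 1) : Fin 2 →₀ ℕ)
      = Finsupp.single 1 1 + (Finsupp.single 0 1 + Finsupp.single 1 (d - 2)) by
    rw [show d - 1 = 1 + (d - 2) by omega, Finsupp.single_add]; abel]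
  exact coeff_X_mul _ _ _

lemma main_le {d : ℕ} (hd : 5 ≤ d) (F : MvPolynomial (Fin 2) ℂ) (hF : F ∈ V (d - 1))
    (hc : coeff (Finsupp.single 1 (d - 1)) F ≠ 0) :
    V d ≤ A d ⊔ Submodule.span ℂ {X 0 * F, X 1 * F} := by
  have hd2 : 2 ≤ d := by omega
  set c : ℂ := coeff (Finsupp.single 1 (d - 1)) F with hcdef
  set T := A d ⊔ Submodule.span ℂ {X 0 * F, X 1 * F} with hT
  have hFh : F.IsHomogeneous (d - 1) := hF
  have hXF : (X 0 : MvPolynomial (Fin 2) ℂ) * F ∈ T :=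
    Submodule.mem_sup_right (Submodule.subset_span (by left; rfl))
  have hX1F : (X 1 : MvPolynomial (Fin 2) ℂ) * F ∈ T :=
    Submodule.mem_sup_right (Submodule.subset_span (by right; rfl))
  have hX0Fd : (X 0 : MvPolynomial (Fin 2) ℂ) * F ∈ V d := by
    rw [mem_homogeneousSubmodule]
    have h := (isHomogeneous_X ℂ (0 : Fin 2)).mul hFh
    rwa [show 1 + (d - 1) = d by omega] at h
  have hX1Fd : (X 1 : MvPolynomial (Fin 2) ℂ) * F ∈ V d := by
    rw [mem_homogeneousSubmodule]
    have h := (isHomogeneous_X ℂ (1 : Fin 2)).mul hFh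
    rwa [show 1 + (d - 1) = d by omega] at h
  -- the monomial t₀ t₁^{d-1} lies in T
  have hq1 := decomp hd2 hX0Fd
  rw [coeff_m0_X0_mul (by omega), coeff_m1_X0_mul, ← hcdef, zero_smul, sub_zero] at hq1
  have hm1 : (monomial (Finsupp.single 0 1 + Finsupp.single 1 (d - 1)) (1 : ℂ)) ∈ T := by
    have h' : c • (monomial (Finsupp.single 0 1 + Finsupp.single 1 (d - 1)) (1 : ℂ)) ∈ T := by
      have h := Submodule.sub_mem T hXF (Submodule.mem_sup_left hq1)
      simpa using h
    have h2 := Submodule.smul_mem T c⁻¹ h'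
    rwa [smul_smul, inv_mul_cancel₀ hc, one_smul] at h2
  -- the monomial t₁^d lies in T
  have hq2 := decomp hd2 hX1Fd
  rw [coeff_m0_X1_mul (by omega), coeff_m1_X1_mul hd2, ← hcdef] at hq2
  have hm0 : (monomial (Finsupp.single 1 d) (1 : ℂ)) ∈ T := by
    have h' : c • (monomial (Finsupp.single 1 d) (1 : ℂ)) ∈ T := by
      have h := Submodule.sub_mem T
        (Submodule.sub_mem T hX1F (Submodule.mem_sup_left hq2))
        (Submodule.smul_mem T (coeff (Finsupp.single 0 1 + Finsupp.single 1 (d - 2)) F) hm1)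
      convert h using 1
      abel
    have h2 := Submodule.smul_mem T c⁻¹ h'
    rwa [smul_smul, inv_mul_cancel₀ hc, one_smul] at h2
  intro p hp
  have hq := decomp hd2 hp
  have hrw : p = (p - coeff (Finsupp.single 1 d) p • monomial (Finsupp.single 1 d) (1 : ℂ)
      - coeff (Finsupp.single 0 1 + Finsupp.single 1 (d - 1)) p •
          monomial (Finsupp.single 0 1 + Finsupp.single 1 (d - 1)) (1 : ℂ))
      + coeff (Finsupp.single 1 d) p • monomial (Finsupp.single 1 d) (1 : ℂ)
      + coeff (Finsupp.single 0 1 + Finsupp.single 1 (d - 1)) p •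
          monomial (Finsupp.single 0 1 + Finsupp.single 1 (d - 1)) (1 : ℂ) := by abel
  rw [hrw]
  exact Submodule.add_mem T
    (Submodule.add_mem T (Submodule.mem_sup_left hq) (Submodule.smul_mem T _ hm0))
    (Submodule.smul_mem T _ hm1)

lemma rank_iff (g g' h h' : ℂ) :
    Matrix.rank !![g, 0; g', g; h, 0; h', h] = 2 ↔ (g ≠ 0 ∨ h ≠ 0) := by
  set M : Matrix (Fin 4) (Fin 2) ℂ := !![g, 0; g', g; h, 0; h', h] with hM
  have hrk : M.rank = 2 ↔ LinearMap.ker M.mulVecLin = ⊥ := by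
    have h1 := LinearMap.finrank_range_add_finrank_ker M.mulVecLin
    rw [Module.finrank_fintype_fun_eq_card, Fintype.card_fin] at h1
    rw [Matrix.rank]
    constructor
    · intro h2
      rw [h2] at h1
      have h3 : Module.finrank ℂ (LinearMap.ker M.mulVecLin) = 0 := by omega
      exact Submodule.finrank_eq_zero.mp h3
    · intro h2
      rw [h2] at h1
      simpa using h1
  rw [hrk, LinearMap.ker_eq_bot']
  constructor
  · intro hinj
    by_contra hgh
    push_neg at hgh
    obtain ⟨hg, hh⟩ := hgh
    have hv : M.mulVecLin ![0, 1] = 0 := by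
      funext i
      fin_cases i <;>
        simp [hM, Matrix.mulVecLin, Matrix.mulVec, dotProduct,
          Fin.sum_univ_two, hg, hh]
    have := hinj _ hv
    have h1 := congrFun this 1
    simp at h1
  · intro hgh v hv
    have h0 := congrFun hv 0
    have h1 := congrFun hv 1
    have h2 := congrFun hv 2
    have h3 := congrFun hv 3
    simp [hM, Matrix.mulVecLin, Matrix.mulVec, dotProduct,
      Fin.sum_univ_two] at h0 h1 h2 h3
    have hv0 : v 0 = 0 ∧ v 1 = 0 := by
      rcases hgh with hg | hh
      · have hv0 : v 0 = 0 := by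
          rcases h0 with h | h
          · exact absurd h hg
          · exact h
        refine ⟨hv0, ?_⟩
        rw [hv0, mul_zero, zero_add] at h1
        rcases mul_eq_zero.mp h1 with h | h
        · exact absurd h hg
        · exact h
      · have hv0 : v 0 = 0 := by
          rcases h2 with h | h
          · exact absurd h hh
          · exact h
        refine ⟨hv0, ?_⟩
        rw [hv0, mul_zero, zero_add] at h3
        rcases mul_eq_zero.mp h3 with h | h
        · exact absurd h hh
        · exact h
    funext i
    fin_cases i
    · exact hv0.1
    · exact hv0.2

lemma coeff2_zero (j : ℕ) (F : MvPolynomial (Fin 2) ℂ) :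
    coeff2 0 j F = coeff (Finsupp.single 1 j) F := by
  simp [coeff2]

end Stmt3Aux

open Stmt3Aux

/-- Criterion of Case 2 of Theorem 3.3: `t₀²·V_{d-2} + <t₀G, t₁G, t₀H, t₁H> = V_d`
iff the matrix `M_Y` has rank 2. -/
theorem statement3 (d : ℕ) (hd : 5 ≤ d)
    (G H : MvPolynomial (Fin 2) ℂ)
    (hG : G ∈ V (d - 1)) (hH : H ∈ V (d - 1)) :
    ((V (d - 2)).map (LinearMap.mulLeft ℂ ((X 0 : MvPolynomial (Fin 2) ℂ) ^ 2)) ⊔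
        Submodule.span ℂ {X 0 * G, X 1 * G, X 0 * H, X 1 * H} = V d)
      ↔ Matrix.rank
          !![coeff2 0 (d - 1) G, 0;
             coeff2 1 (d - 2) G, coeff2 0 (d - 1) G;
             coeff2 0 (d - 1) H, 0;
             coeff2 1 (d - 2) H, coeff2 0 (d - 1) H] = 2 := by
  rw [rank_iff, coeff2_zero, coeff2_zero]
  have hd2 : 2 ≤ d := by omega
  set S : Set (MvPolynomial (Fin 2) ℂ) := {X 0 * G, X 1 * G, X 0 * H, X 1 * H} with hS
  have hAle : A d ≤ V d := by
    rintro _ ⟨q, hq, rfl⟩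
    simp only [LinearMap.mulLeft_apply]
    have hq' : q.IsHomogeneous (d - 2) := hq
    rw [mem_homogeneousSubmodule]
    have hX2 : ((X 0 : MvPolynomial (Fin 2) ℂ) ^ 2).IsHomogeneous 2 := by
      rw [X_pow_eq_monomial]
      exact isHomogeneous_monomial _ (by rw [degree_fin2]; simp [Finsupp.single_apply])
    have h := hX2.mul hq'
    rwa [show 2 + (d - 2) = d by omega] at h
  have hSle : Submodule.span ℂ S ≤ V d := by
    rw [Submodule.span_le]
    have hgen : ∀ (i : Fin 2) (F : MvPolynomial (Fin 2) ℂ), F ∈ V (d - 1) →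
        (X i * F : MvPolynomial (Fin 2) ℂ) ∈ V d := by
      intro i F hF
      rw [mem_homogeneousSubmodule]
      have h := (isHomogeneous_X ℂ i).mul (hF)
      rwa [show 1 + (d - 1) = d by omega] at h
    rintro p (rfl | rfl | rfl | rfl)
    · exact hgen 0 G hG
    · exact hgen 1 G hG
    · exact hgen 0 H hH
    · exact hgen 1 H hH
  constructor
  · intro heq
    by_contra hgh
    push_neg at hgh
    obtain ⟨hg, hh⟩ := hgh
    have hker : A d ⊔ Submodule.span ℂ S ≤
        LinearMap.ker (lcoeff ℂ (Finsupp.single 1 d)) := by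
      apply sup_le
      · rintro _ ⟨q, hq, rfl⟩
        simp only [LinearMap.mulLeft_apply, LinearMap.mem_ker, lcoeff_apply]
        have hfac : (X 0 : MvPolynomial (Fin 2) ℂ) ^ 2 * q = X 0 * (X 0 * q) := by ring
        rw [hfac]
        exact coeff_m0_X0_mul (by omega) _
      · rw [Submodule.span_le]
        rintro p (rfl | rfl | rfl | rfl) <;>
          simp only [SetLike.mem_coe, LinearMap.mem_ker, lcoeff_apply]
        · exact coeff_m0_X0_mul (by omega) G
        · rw [coeff_m0_X1_mul (by omega) G]; exact hg
        · exact coeff_m0_X0_mul (by omega) H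
        · rw [coeff_m0_X1_mul (by omega) H]; exact hh
    have hmono : (monomial (Finsupp.single 1 d) (1 : ℂ)) ∈ V d :=
      isHomogeneous_monomial _ (deg_s1 d)
    rw [← heq] at hmono
    have := hker hmono
    simp only [LinearMap.mem_ker, lcoeff_apply, coeff_monomial, if_pos rfl] at this
    exact one_ne_zero this
  · intro hgh
    apply le_antisymm (sup_le hAle hSle)
    rcases hgh with hg | hh
    · refine le_trans (main_le hd G hG hg) (sup_le_sup_left ?_ _)
      apply Submodule.span_mono
      intro x hx
      rcases hx with rfl | rfl
      · left; rfl
      · right; left; rfl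
    · refine le_trans (main_le hd H hH hh) (sup_le_sup_left ?_ _)
      apply Submodule.span_mono
      intro x hx
      rcases hx with rfl | rfl
      · right; right; left; rfl
      · right; right; right; rfl
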